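/- arXiv:2102.09148 — 2 statements merged into one kernel-verified Lean document; each statement's English description precedes it below -/
import Mathlib

section
/- In the setting of the previous theorem, equality ‖uⁿ⁺¹‖ = ‖uⁿ‖ (discrete energy conservation at step n) holds if and only if c_h(u^{n+1/2}; u^{n+1/2}, u^{n+1/2}) + d_h(u^{n+1/2}, u^{n+1/2}) = 0. -/
open scoped RealInnerProductSpace

theorem norm_eq_norm_iff_inner_sub_midpoint_eq_zero {V : Type*} [NormedAddCommGroup V]
    [InnerProductSpace ℝ V] (a b : V) :
    ‖a‖ = ‖b‖ ↔ ⟪a - b, (2 : ℝ)⁻¹ • (a + b)⟫ = 0 := by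
  rw [real_inner_smul_right, real_inner_comm, ← real_inner_add_sub_eq_zero_iff]
  simp

theorem discrete_energy_conservation_iff_general
    {V : Type*} [NormedAddCommGroup V] [InnerProductSpace ℝ V]
    (c : V → V →ₗ[ℝ] V →ₗ[ℝ] ℝ) (d : V →ₗ[ℝ] V →ₗ[ℝ] ℝ)
    (u : ℕ → V) (τ : ℕ → ℝ) (hτ : ∀ n, 0 < τ n)
    (heq : ∀ n : ℕ, ∀ v : V,
      ⟪(τ n)⁻¹ • (u (n + 1) - u n), v⟫
        + c ((2 : ℝ)⁻¹ • (u (n + 1) + u n)) ((2 : ℝ)⁻¹ • (u (n + 1) + u n)) v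
        + d ((2 : ℝ)⁻¹ • (u (n + 1) + u n)) v = 0) :
    ∀ n : ℕ,
      (‖u (n + 1)‖ = ‖u n‖ ↔
        c ((2 : ℝ)⁻¹ • (u (n + 1) + u n)) ((2 : ℝ)⁻¹ • (u (n + 1) + u n))
            ((2 : ℝ)⁻¹ • (u (n + 1) + u n))
          + d ((2 : ℝ)⁻¹ • (u (n + 1) + u n)) ((2 : ℝ)⁻¹ • (u (n + 1) + u n)) = 0) := by
  intro n
  -- Testing the scheme with the midpoint leaves `τ⁻¹ ⟪uⁿ⁺¹ - uⁿ, u^{n+1/2}⟫ + (c + d) = 0`.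
  have hscheme := heq n ((2 : ℝ)⁻¹ • (u (n + 1) + u n))
  rw [real_inner_smul_left, add_assoc] at hscheme
  rw [norm_eq_norm_iff_inner_sub_midpoint_eq_zero,
    ← mul_eq_zero_iff_left (inv_ne_zero (hτ n).ne')]
  constructor <;> intro h <;> linarith

/-- Discrete energy conservation characterization: in the Crank–Nicolson scheme,
`‖uⁿ⁺¹‖ = ‖uⁿ‖` holds iff `c(u^{n+1/2}; u^{n+1/2}, u^{n+1/2}) + d(u^{n+1/2}, u^{n+1/2}) = 0`. -/
theorem discrete_energy_conservation_iff
    {V : Type*} [NormedAddCommGroup V] [InnerProductSpace ℝ V]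
    [FiniteDimensional ℝ V]
    (c : V → V →ₗ[ℝ] V →ₗ[ℝ] ℝ) (d : V →ₗ[ℝ] V →ₗ[ℝ] ℝ)
    (hc : ∀ v : V, 0 ≤ c v v v) (hd : ∀ v : V, 0 ≤ d v v)
    (u : ℕ → V) (τ : ℕ → ℝ) (hτ : ∀ n, 0 < τ n)
    (heq : ∀ n : ℕ, ∀ v : V,
      ⟪(τ n)⁻¹ • (u (n + 1) - u n), v⟫
        + c ((2 : ℝ)⁻¹ • (u (n + 1) + u n)) ((2 : ℝ)⁻¹ • (u (n + 1) + u n)) v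
        + d ((2 : ℝ)⁻¹ • (u (n + 1) + u n)) v = 0) :
    ∀ n : ℕ,
      (‖u (n + 1)‖ = ‖u n‖ ↔
        c ((2 : ℝ)⁻¹ • (u (n + 1) + u n)) ((2 : ℝ)⁻¹ • (u (n + 1) + u n))
            ((2 : ℝ)⁻¹ • (u (n + 1) + u n))
          + d ((2 : ℝ)⁻¹ • (u (n + 1) + u n)) ((2 : ℝ)⁻¹ • (u (n + 1) + u n)) = 0) :=
  discrete_energy_conservation_iff_general c d u τ hτ heq
end

section
/- Let V be a finite-dimensional real inner product space and Q a finite-dimensional real vector space, b : V × Q → ℝ bilinear, c_h with c_h(v;v,v) ≥ 0, d_h positive semi-definite bilinear. If (u(t), P(t)) ∈ V × Q satisfy (u'(t), v) + c_h(u(t); u(t), v) − b(v, P(t)) + d_h(u(t), v) = 0 for all v ∈ V and b(u(t), q) = 0 for all q ∈ Q, then t ↦ ‖u(t)‖ is nonincreasing. -/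
open scoped RealInnerProductSpace

theorem antitoneOn_norm_of_inner_hasDerivAt_nonpos {V : Type*} [NormedAddCommGroup V]
    [InnerProductSpace ℝ V] {s : Set ℝ} (hs : Convex ℝ s) {u u' : ℝ → V}
    (hu : ∀ t ∈ s, HasDerivAt u (u' t) t) (hinner : ∀ t ∈ s, ⟪u t, u' t⟫ ≤ 0) :
    AntitoneOn (‖u ·‖) s := by
  have hsq : AntitoneOn (‖u ·‖ ^ 2) s :=
    antitoneOn_of_hasDerivWithinAt_nonpos hs
      (fun t ht ↦ (hu t ht).norm_sq.continuousAt.continuousWithinAt)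
      (fun t ht ↦ (hu t (interior_subset ht)).norm_sq.hasDerivWithinAt)
      (fun t ht ↦ mul_nonpos_of_nonneg_of_nonpos zero_le_two (hinner t (interior_subset ht)))
  exact fun a ha b hb hab ↦
    (pow_le_pow_iff_left₀ (norm_nonneg _) (norm_nonneg _) two_ne_zero).mp (hsq ha hb hab)

theorem mixed_semi_discrete_stability_general
    {V : Type*} [NormedAddCommGroup V] [InnerProductSpace ℝ V]
    {Q : Type*} [AddCommGroup Q] [Module ℝ Q]
    (b : V →ₗ[ℝ] Q →ₗ[ℝ] ℝ)
    (c : V → V →ₗ[ℝ] V →ₗ[ℝ] ℝ) (d : V →ₗ[ℝ] V →ₗ[ℝ] ℝ)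
    (hc : ∀ v : V, 0 ≤ c v v v) (hd : ∀ v : V, 0 ≤ d v v)
    (u u' : ℝ → V) (P : ℝ → Q)
    (hderiv : ∀ t ∈ Set.Ici (0 : ℝ), HasDerivAt u (u' t) t)
    (heq : ∀ t ∈ Set.Ici (0 : ℝ), ∀ v : V,
      ⟪u' t, v⟫ + c (u t) (u t) v - b v (P t) + d (u t) v = 0)
    (hconstraint : ∀ t ∈ Set.Ici (0 : ℝ), ∀ q : Q, b (u t) q = 0) :
    AntitoneOn (fun t => ‖u t‖) (Set.Ici (0 : ℝ)) := by
  refine antitoneOn_norm_of_inner_hasDerivAt_nonpos (convex_Ici 0) hderiv fun t ht ↦ ?_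
  -- Testing with `v = u t`: the pressure term vanishes by the constraint with `q = P t`.
  have henergy := heq t ht (u t)
  have hpressure := hconstraint t ht (P t)
  rw [real_inner_comm]
  linarith [hc (u t), hd (u t)]

/-- Mixed-form semi-discrete stability (Theorem 1): with a bilinear constraint
form `b`, positivity of `c` and `d`, and the mixed scheme
`(u'(t),v) + c(u(t);u(t),v) − b(v,P(t)) + d(u(t),v) = 0`, `b(u(t),q) = 0`,
the map `t ↦ ‖u(t)‖` is nonincreasing. -/
theorem mixed_semi_discrete_stability
    {V : Type*} [NormedAddCommGroup V] [InnerProductSpace ℝ V]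
    [FiniteDimensional ℝ V]
    {Q : Type*} [AddCommGroup Q] [Module ℝ Q] [FiniteDimensional ℝ Q]
    (b : V →ₗ[ℝ] Q →ₗ[ℝ] ℝ)
    (c : V → V →ₗ[ℝ] V →ₗ[ℝ] ℝ) (d : V →ₗ[ℝ] V →ₗ[ℝ] ℝ)
    (hc : ∀ v : V, 0 ≤ c v v v) (hd : ∀ v : V, 0 ≤ d v v)
    (u u' : ℝ → V) (P : ℝ → Q)
    (hderiv : ∀ t ∈ Set.Ici (0 : ℝ), HasDerivAt u (u' t) t)
    (heq : ∀ t ∈ Set.Ici (0 : ℝ), ∀ v : V,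
      ⟪u' t, v⟫ + c (u t) (u t) v - b v (P t) + d (u t) v = 0)
    (hconstraint : ∀ t ∈ Set.Ici (0 : ℝ), ∀ q : Q, b (u t) q = 0) :
    AntitoneOn (fun t => ‖u t‖) (Set.Ici (0 : ℝ)) :=
  mixed_semi_discrete_stability_general b c d hc hd u u' P hderiv heq hconstraint
end
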